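/- Let X be a metric space and suppose μ is a Borel regular measure, A ⊆ X Borel, α > 0, with S_{μ,ζ_{b,α}} covering A finely, S^α(A) < ∞, μ⌊A ≪ S^α⌊A, and suppose there exist constants 0 < β < α_0 such that Θ^{*α}(μ,x) = β and θ^α(μ,x) = α_0 for all x ∈ A. Then μ(A) = α_0 S^α(A) > t S^α(A) for every t ∈ (β, α_0); in particular the upper centered density β strictly underestimates the ratio μ(A)/S^α(A), showing the constant 1 cannot replace 2^m in Federer's density comparison 2.10.19(1) even for the spherical Hausdorff measure. -/

import Mathlib

open Set Metric MeasureTheory ENNReal Filter Topology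

variable {X : Type*}

section Defs
variable [MetricSpace X] [MeasurableSpace X]

/-- The `δ`-approximating pre-measure `ζ_δ` of the Carathéodory construction built from a
family of sets `S` and a size function `ζ`: the infimum of `∑_j ζ(E_j)` over countable
covers of `R` by members `E_j ∈ S` of diameter at most `δ`. -/
noncomputable def caraPre (S : Set (Set X)) (ζ : Set X → ℝ≥0∞) (δ : ℝ≥0∞) (R : Set X) : ℝ≥0∞ :=
  ⨅ (E : ℕ → Set X) (_ : ∀ n, E n ∈ S ∧ EMetric.diam (E n) ≤ δ) (_ : R ⊆ ⋃ n, E n),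
    ∑' n, ζ (E n)

/-- The Carathéodory approximating measure `ψ_ζ = sup_{δ>0} ζ_δ`. -/
noncomputable def psi (S : Set (Set X)) (ζ : Set X → ℝ≥0∞) (R : Set X) : ℝ≥0∞ :=
  ⨆ (δ : ℝ≥0∞) (_ : 0 < δ), caraPre S ζ δ R

/-- The quotient function `Q_{μ,ζ}`. -/
noncomputable def fedQuot (μ : Measure X) (ζ : Set X → ℝ≥0∞) (T : Set X) : ℝ≥0∞ :=
  if ζ T = 0 then ∞ else if ζ T = ∞ then 0 else μ T / ζ T

/-- The family `S_{μ,ζ}`: members of `S` except those on which `ζ` and `μ` both vanish or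
are both infinite. -/
def adm (μ : Measure X) (S : Set (Set X)) (ζ : Set X → ℝ≥0∞) : Set (Set X) :=
  {T ∈ S | ¬ (ζ T = 0 ∧ μ T = 0) ∧ ¬ (ζ T = ∞ ∧ μ T = ∞)}

/-- A family of sets `𝒮` covers finely at `x` (equivalently, the associated covering
relation is fine at `x`). -/
def Fine (𝒮 : Set (Set X)) (x : X) : Prop :=
  ∀ ε : ℝ≥0∞, 0 < ε → ∃ T ∈ 𝒮, x ∈ T ∧ EMetric.diam T < ε

/-- The Federer density `F^ζ(μ,x)`: the covering limsup of `Q_{μ,ζ}` over members of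
`S_{μ,ζ}` containing `x` with diameter tending to `0`. -/
noncomputable def fedDensity (μ : Measure X) (S : Set (Set X)) (ζ : Set X → ℝ≥0∞) (x : X) :
    ℝ≥0∞ :=
  ⨅ (ε : ℝ≥0∞) (_ : 0 < ε),
    ⨆ (T : Set X) (_ : T ∈ adm μ S ζ ∧ x ∈ T ∧ EMetric.diam T < ε), fedQuot μ ζ T

/-- The size function `ζ_α(T) = c_α diam(T)^α`. -/
noncomputable def sizeDiam (c : ℝ≥0∞) (α : ℝ) (T : Set X) : ℝ≥0∞ :=
  c * EMetric.diam T ^ α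

/-- The enlargement `Ŝ = ⋃ {T ∈ S : T ∩ S ≠ ∅, diam T ≤ 2 diam S}`. -/
def hatSet (S : Set (Set X)) (T : Set X) : Set X :=
  ⋃₀ {U | U ∈ S ∧ (U ∩ T).Nonempty ∧ EMetric.diam U ≤ 2 * EMetric.diam T}

/-- The doubling-type condition on the size function `ζ`: there are constants `c, η > 0`
such that every `S ∈ 𝒮` admits `S̃ ∈ 𝒮` with `Ŝ ⊆ S̃`, `diam S̃ ≤ c diam S` and
`ζ(S̃) ≤ η ζ(S)`. -/
def DoublingSize (S : Set (Set X)) (ζ : Set X → ℝ≥0∞) : Prop :=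
  ∃ c η : ℝ≥0∞, 0 < c ∧ c < ∞ ∧ 0 < η ∧ η < ∞ ∧
    ∀ T ∈ S, ∃ T' ∈ S, hatSet S T ⊆ T' ∧
      EMetric.diam T' ≤ c * EMetric.diam T ∧ ζ T' ≤ η * ζ T

end Defs

/-- The family of all closed balls (with positive radius) of a metric space. -/
def closedBallsF (X : Type*) [MetricSpace X] : Set (Set X) :=
  {T | ∃ (x : X) (r : ℝ), 0 < r ∧ T = Metric.closedBall x r}

/-- The family of all closed subsets of a metric space. -/
def closedSetsF (X : Type*) [MetricSpace X] : Set (Set X) := {T | IsClosed T}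

section DefsM
variable [MetricSpace X] [MeasurableSpace X]

/-- A (outer) measure `μ` is Borel regular if every set is contained in a Borel set of the
same measure. -/
def BorelRegular (μ : Measure X) : Prop :=
  ∀ A : Set X, ∃ B : Set X, MeasurableSet B ∧ A ⊆ B ∧ μ A = μ B

/-- There exists a countable open cover of `X` whose elements have finite `μ`-measure. -/
def SigmaFiniteOpen (μ : Measure X) : Prop :=
  ∃ U : ℕ → Set X, (∀ n, IsOpen (U n)) ∧ (⋃ n, U n) = univ ∧ ∀ n, μ (U n) < ∞

/- The Carathéodory-construction measure `ψ_ζ` as a Borel measure, via the metric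
construction (sets outside the family `S` are given infinite size). -/
open Classical in
noncomputable def psiM [MeasurableSpace X] [BorelSpace X] (S : Set (Set X))
    (ζ : Set X → ℝ≥0∞) : Measure X :=
  Measure.mkMetric' (fun T => if T ∈ S then ζ T else ∞)

/-- The upper (centered) spherical density
`Θ^{*α}(μ,x) = limsup_{r→0⁺} μ(B̄(x,r))/(c_α (2r)^α)`. -/
noncomputable def upperSphDensity (μ : Measure X) (c : ℝ≥0∞) (α : ℝ) (x : X) : ℝ≥0∞ :=
  Filter.limsup
    (fun r : ℝ => μ (Metric.closedBall x r) / (c * ENNReal.ofReal (2 * r) ^ α)) (𝓝[>] 0)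

/-- `X` is diametrically regular: for all `x ∈ X`, `R > 0` there is `δ > 0` such that
`t ↦ diam B(y,t)` is continuous on `(0,δ)` for every `y ∈ B̄(x,R)`. -/
def DiamRegular (X : Type*) [MetricSpace X] : Prop :=
  ∀ x : X, ∀ R > (0:ℝ), ∃ δ > (0:ℝ), ∀ y ∈ Metric.closedBall x R,
    ContinuousOn (fun t : ℝ => Metric.diam (Metric.ball y t)) (Ioo 0 δ)

end DefsM

/-!
Comparing `μ` with `λ ζ` on small balls gives both inequalities. Where the Federer density is
below `λ`, every small ball `T` through the point has `μ T ≤ λ ζ(T)`, so every admissible cover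
of `A` bounds `μ` from above and `μ(A) ≤ λ S^α(A)`. Where it is above `λ`, the balls with
`λ ζ(T) ≤ μ T` cover finely; inside an open `W ⊇ A` of almost minimal measure, a Vitali
disjoint subfamily together with the enlargements (diameter `≤ 6 diam`) of its tail covers `A`,
whence `λ S^α(A) ≤ μ(W)`. The open sets of finite measure this needs exist because the upper
spherical density is finite, and countably many suffice because `S^α(A) < ∞` makes `A`
separable. Hence `μ(A) = α₀ S^α(A)`, which exceeds `t S^α(A)` since `0 < S^α(A) < ∞`.
-/

open Classical in
noncomputable def sizeOn (S : Set (Set X)) (ζ : Set X → ℝ≥0∞) (T : Set X) : ℝ≥0∞ :=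
  if T ∈ S then ζ T else ∞

theorem sizeOn_of_mem {S : Set (Set X)} {ζ : Set X → ℝ≥0∞} {T : Set X} (hT : T ∈ S) :
    sizeOn S ζ T = ζ T := if_pos hT

section SphericalMeasure
variable [MetricSpace X] [MeasurableSpace X] [BorelSpace X]

theorem psiM_eq_mkMetric' (S : Set (Set X)) (ζ : Set X → ℝ≥0∞) :
    psiM S ζ = Measure.mkMetric' (sizeOn S ζ) := rfl

theorem psiM_apply_eq_iSup_pre (S : Set (Set X)) (ζ : Set X → ℝ≥0∞) {s : Set X}
    (hs : MeasurableSet s) :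
    psiM S ζ s = ⨆ r > 0, OuterMeasure.mkMetric'.pre (sizeOn S ζ) r s := by
  rw [psiM_eq_mkMetric', ← Measure.toOuterMeasure_apply, Measure.mkMetric'_toOuterMeasure,
    OuterMeasure.trim_eq _ hs, OuterMeasure.mkMetric', OuterMeasure.iSup_apply]
  simp only [OuterMeasure.iSup_apply]

theorem pre_le_psiM (S : Set (Set X)) (ζ : Set X → ℝ≥0∞) {r : ℝ≥0∞} (hr : 0 < r) (s : Set X) :
    OuterMeasure.mkMetric'.pre (sizeOn S ζ) r s ≤ psiM S ζ s := by
  rw [psiM_eq_mkMetric', ← Measure.toOuterMeasure_apply, Measure.mkMetric'_toOuterMeasure]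
  refine le_trans ?_ (OuterMeasure.le_trim _ s)
  exact le_iSup₂ (f := fun r (_ : 0 < r) => OuterMeasure.mkMetric'.pre (sizeOn S ζ) r) r hr s

end SphericalMeasure

section Separable
variable [MetricSpace X]

theorem exists_cover_ediam_le_of_pre_lt_top {m : Set X → ℝ≥0∞} {r : ℝ≥0∞} {s : Set X}
    (h : OuterMeasure.mkMetric'.pre m r s < ∞) :
    ∃ t : ℕ → Set X, s ⊆ ⋃ n, t n ∧ ∀ n, (t n).Nonempty → ediam (t n) ≤ r := by
  rw [OuterMeasure.mkMetric'.pre, OuterMeasure.boundedBy_apply] at h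
  obtain ⟨t, ht⟩ := iInf_lt_iff.1 h
  obtain ⟨hcover, hsum⟩ := iInf_lt_iff.1 ht
  refine ⟨t, hcover, fun n hn => not_lt.1 fun hlt => ?_⟩
  have hterm := (ENNReal.le_tsum n).trans_lt hsum
  rw [iSup_pos hn] at hterm
  simp [extend, hlt.not_ge] at hterm

theorem isSeparable_of_psiM_lt_top [MeasurableSpace X] [BorelSpace X] {S : Set (Set X)}
    {ζ : Set X → ℝ≥0∞} {A : Set X} (h : psiM S ζ A < ∞) : TopologicalSpace.IsSeparable A := by
  obtain ⟨D, -, hD, hAD⟩ := EMetric.subset_countable_closure_of_almost_dense_set A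
    fun ε hε => by
      obtain ⟨t, hcover, hdiam⟩ :=
        exists_cover_ediam_le_of_pre_lt_top ((pre_le_psiM S ζ hε A).trans_lt h)
      refine ⟨range fun n : {n // (t n).Nonempty} => n.2.some, countable_range _, fun x hx => ?_⟩
      obtain ⟨n, hxn⟩ := mem_iUnion.1 (hcover hx)
      have hn : (t n).Nonempty := ⟨x, hxn⟩
      refine mem_biUnion (mem_range_self ⟨n, hn⟩) ?_
      exact (edist_le_ediam_of_mem hxn hn.some_mem).trans (hdiam n hn)
  exact ⟨D, hD, hAD⟩

end Separable

section LocalFiniteness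
variable [MetricSpace X] [MeasurableSpace X]

theorem finiteAtFilter_nhds_of_upperSphDensity_lt_top {μ : Measure X} {c : ℝ≥0∞} {α : ℝ}
    {x : X} (hc : c ≠ ∞) (h : upperSphDensity μ c α x < ∞) : μ.FiniteAtFilter (𝓝 x) := by
  obtain ⟨b, hb, hbtop⟩ := exists_between h
  obtain ⟨r, hratio, hr⟩ := ((eventually_lt_of_limsup_lt hb).and self_mem_nhdsWithin).exists
  have hden : c * ENNReal.ofReal (2 * r) ^ α ≠ ∞ :=
    ENNReal.mul_ne_top hc (ENNReal.rpow_ne_top_of_ne_zero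
      (ENNReal.ofReal_pos.2 (by linarith)).ne' ENNReal.ofReal_ne_top)
  refine ⟨closedBall x r, closedBall_mem_nhds x hr, ?_⟩
  have hμ := (ENNReal.div_le_iff_le_mul (Or.inr hbtop.ne) (Or.inl hden)).1 hratio.le
  exact hμ.trans_lt (ENNReal.mul_lt_top hbtop (lt_top_iff_ne_top.2 hden))

theorem exists_seq_isOpen_measure_lt_top_cover {μ : Measure X} {A : Set X}
    (hsep : TopologicalSpace.IsSeparable A) (hloc : ∀ x ∈ A, μ.FiniteAtFilter (𝓝 x)) :
    ∃ U : ℕ → Set X, (∀ n, IsOpen (U n)) ∧ (∀ n, μ (U n) < ∞) ∧ A ⊆ ⋃ n, U n := by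
  let 𝒰 := {U : Set X | IsOpen U ∧ μ U < ∞}
  have hcover : A ⊆ ⋃ U : 𝒰, (U : Set X) := fun x hx => by
    obtain ⟨s, hs, hμs⟩ := hloc x hx
    exact mem_iUnion.2 ⟨⟨interior s, isOpen_interior,
      (measure_mono interior_subset).trans_lt hμs⟩, mem_interior_iff_mem_nhds.2 hs⟩
  have := hsep.secondCountableTopology
  obtain ⟨r, hr, hAr⟩ := (isLindelof_iff_lindelofSpace.2 inferInstance :
    IsLindelof A).elim_countable_subcover _ (fun U : 𝒰 => U.2.1) hcover
  -- `∅` makes the countable subfamily nonempty, so that it can be enumerated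
  let empty : 𝒰 := ⟨∅, isOpen_empty, by simp⟩
  obtain ⟨f, hf⟩ := (hr.insert empty).exists_eq_range (insert_nonempty _ _)
  refine ⟨fun n => f n, fun n => (f n).2.1, fun n => (f n).2.2, hAr.trans ?_⟩
  refine iUnion₂_subset fun U hU => ?_
  obtain ⟨n, hn⟩ : U ∈ range f := hf ▸ mem_insert_of_mem _ hU
  exact subset_iUnion_of_subset n (by rw [hn])

end LocalFiniteness

section FedererDensity
variable [MetricSpace X] [MeasurableSpace X] {μ : Measure X} {S : Set (Set X)}
  {ζ : Set X → ℝ≥0∞} {lam : ℝ≥0∞} {x : X}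

theorem exists_forall_measure_le_of_fedDensity_lt (h : fedDensity μ S ζ x < lam) :
    ∃ ε > 0, ∀ T ∈ S, x ∈ T → ediam T < ε → μ T ≤ lam * ζ T := by
  obtain ⟨ε, hε⟩ := iInf_lt_iff.1 h
  obtain ⟨hε0, hsup⟩ := iInf_lt_iff.1 hε
  have hlam : lam ≠ 0 := (hsup.trans_le' zero_le).ne'
  refine ⟨ε, hε0, fun T hTS hxT hTε => ?_⟩
  by_cases hadm : T ∈ adm μ S ζ
  · have hq : fedQuot μ ζ T < lam := (le_iSup₂ (f := fun T
        (_ : T ∈ adm μ S ζ ∧ x ∈ T ∧ EMetric.diam T < ε) => fedQuot μ ζ T) T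
        ⟨hadm, hxT, hTε⟩).trans_lt hsup
    unfold fedQuot at hq
    split_ifs at hq with h0 htop
    · simp at hq
    · simp [htop, ENNReal.mul_top hlam]
    · exact ((ENNReal.div_lt_iff (Or.inl h0) (Or.inl htop)).1 hq).le
  · simp only [adm, mem_setOf_eq, hTS, true_and, ← not_or, not_not] at hadm
    rcases hadm with ⟨-, hμ⟩ | ⟨hζ, -⟩
    · simp [hμ]
    · simp [hζ, ENNReal.mul_top hlam]

theorem exists_mem_of_lt_fedDensity (h : lam < fedDensity μ S ζ x) {ε : ℝ≥0∞} (hε : 0 < ε) :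
    ∃ T ∈ S, x ∈ T ∧ ediam T < ε ∧ lam * ζ T ≤ μ T ∧ 0 < μ T := by
  have hsup := h.trans_le (iInf₂_le ε hε)
  obtain ⟨T, hT⟩ := lt_iSup_iff.1 hsup
  obtain ⟨⟨⟨hTS, hnull, -⟩, hxT, hTε⟩, hq⟩ := lt_iSup_iff.1 hT
  refine ⟨T, hTS, hxT, hTε, ?_⟩
  unfold fedQuot at hq
  split_ifs at hq with h0 htop
  · exact ⟨by simp [h0], pos_iff_ne_zero.2 fun hμ => hnull ⟨h0, hμ⟩⟩
  · simp at hq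
  · have hlt := (ENNReal.lt_div_iff_mul_lt (Or.inl h0) (Or.inl htop)).1 hq
    exact ⟨hlt.le, hlt.trans_le' zero_le⟩

theorem exists_subset_of_lt_fedDensity (h : lam < fedDensity μ S ζ x) {W : Set X}
    (hW : W ∈ 𝓝 x) {ε : ℝ≥0∞} (hε : 0 < ε) :
    ∃ T ∈ S, x ∈ T ∧ T ⊆ W ∧ ediam T < ε ∧ lam * ζ T ≤ μ T ∧ 0 < μ T := by
  obtain ⟨ρ, hρ, hρW⟩ := EMetric.mem_nhds_iff.1 hW
  obtain ⟨T, hTS, hxT, hTε, hζμ, hμ⟩ := exists_mem_of_lt_fedDensity h (lt_min hε hρ)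
  refine ⟨T, hTS, hxT, fun y hy => hρW ?_, hTε.trans_le (min_le_left _ _), hζμ, hμ⟩
  exact (edist_le_ediam_of_mem hy hxT).trans_lt (hTε.trans_le (min_le_right _ _))

end FedererDensity

section UpperBound
variable [MetricSpace X] [MeasurableSpace X] {μ : Measure X}

theorem measure_le_mul_pre {m : Set X → ℝ≥0∞} {r lam : ℝ≥0∞} (hlam0 : lam ≠ 0)
    (hlam : lam ≠ ∞) {B : Set X}
    (h : ∀ T, (T ∩ B).Nonempty → ediam T ≤ r → μ T ≤ lam * m T) :
    μ B ≤ lam * OuterMeasure.mkMetric'.pre m r B := by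
  suffices key : lam⁻¹ • OuterMeasure.restrict B μ.toOuterMeasure ≤
      OuterMeasure.mkMetric'.pre m r by
    simpa [ENNReal.inv_mul_le_iff hlam0 hlam] using key B
  refine OuterMeasure.mkMetric'.le_pre.2 fun T hT => ?_
  simp only [OuterMeasure.smul_apply, OuterMeasure.restrict_apply, smul_eq_mul,
    Measure.toOuterMeasure_apply]
  rcases (T ∩ B).eq_empty_or_nonempty with hTB | hTB
  · simp [hTB]
  · rw [ENNReal.inv_mul_le_iff hlam0 hlam]
    exact (measure_mono inter_subset_left).trans (h T hTB hT)

theorem measure_le_mul_psiM_of_fedDensity_lt [BorelSpace X] {S : Set (Set X)}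
    {ζ : Set X → ℝ≥0∞} {lam : ℝ≥0∞} (hlam : lam ≠ ∞) {A : Set X}
    (h : ∀ x ∈ A, fedDensity μ S ζ x < lam) : μ A ≤ lam * psiM S ζ A := by
  rcases A.eq_empty_or_nonempty with rfl | ⟨x₀, hx₀⟩
  · simp
  have hlam0 : lam ≠ 0 := ((h x₀ hx₀).trans_le' zero_le).ne'
  let A' : ℕ → Set X := fun k =>
    {x ∈ A | ∀ T ∈ S, x ∈ T → ediam T < (k : ℝ≥0∞)⁻¹ → μ T ≤ lam * ζ T}
  have hmono : Monotone A' := fun k l hkl x hx =>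
    ⟨hx.1, fun T hTS hxT hT => hx.2 T hTS hxT (hT.trans_le (by gcongr))⟩
  have hcover : A ⊆ ⋃ k, A' k := fun x hx => by
    obtain ⟨ε, hε, hxε⟩ := exists_forall_measure_le_of_fedDensity_lt (h x hx)
    obtain ⟨k, hk⟩ := ENNReal.exists_inv_nat_lt hε.ne'
    exact mem_iUnion.2 ⟨k, hx, fun T hTS hxT hT => hxε T hTS hxT (hT.trans hk)⟩
  have hpiece : ∀ k, μ (A' k) ≤ lam * psiM S ζ A := fun k => by
    have hr : ((k : ℝ≥0∞) + 1)⁻¹ < (k : ℝ≥0∞)⁻¹ :=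
      ENNReal.inv_lt_inv.2 (ENNReal.lt_add_right (ENNReal.natCast_ne_top k) one_ne_zero)
    refine (measure_le_mul_pre (m := sizeOn S ζ) (r := ((k : ℝ≥0∞) + 1)⁻¹) hlam0 hlam
      fun T hTA hT => ?_).trans ?_
    · obtain ⟨y, hyT, hy⟩ := hTA
      by_cases hTS : T ∈ S
      · rw [sizeOn_of_mem hTS]
        exact hy.2 T hTS hyT (hT.trans_lt hr)
      · simp [sizeOn, hTS, ENNReal.mul_top hlam0]
    · gcongr
      exact (pre_le_psiM S ζ (ENNReal.inv_pos.2 (by simp)) _).trans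
        (measure_mono fun y (hy : y ∈ A' k) => hy.1)
  calc μ A ≤ μ (⋃ k, A' k) := measure_mono hcover
    _ = ⨆ k, μ (A' k) := hmono.measure_iUnion
    _ ≤ lam * psiM S ζ A := iSup_le hpiece

end UpperBound

section Vitali
variable [MetricSpace X]

theorem exists_disjoint_subfamily_ediam_le_two_mul {t : Set (Set X)} {Δ : ℝ≥0∞} (hΔ : Δ ≠ ∞)
    (hne : ∀ a ∈ t, a.Nonempty) (hle : ∀ a ∈ t, ediam a ≤ Δ) :
    ∃ u ⊆ t, u.PairwiseDisjoint id ∧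
      ∀ a ∈ t, ∃ b ∈ u, (a ∩ b).Nonempty ∧ ediam a ≤ 2 * ediam b := by
  obtain ⟨u, hut, hdisj, hcov⟩ := Vitali.exists_disjoint_subfamily_covering_enlargement id t
    (fun a => (ediam a).toReal) 2 one_lt_two (fun _ _ => ENNReal.toReal_nonneg) Δ.toReal
    (fun a ha => ENNReal.toReal_mono hΔ (hle a ha)) hne
  refine ⟨u, hut, hdisj, fun a ha => ?_⟩
  obtain ⟨b, hbu, hab, hδ⟩ := hcov a ha
  have hb : ediam b ≠ ∞ := ne_top_of_le_ne_top hΔ (hle b (hut hbu))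
  refine ⟨b, hbu, hab, ?_⟩
  rwa [← ENNReal.toReal_le_toReal (ne_top_of_le_ne_top hΔ (hle a ha))
    (ENNReal.mul_ne_top ENNReal.ofNat_ne_top hb), ENNReal.toReal_mul, ENNReal.toReal_ofNat]

theorem ediam_closedBall_le (x : X) {r : ℝ} (hr : 0 ≤ r) :
    ediam (closedBall x r) ≤ 2 * ENNReal.ofReal r := by
  rw [← closedEBall_ofReal hr]
  exact ediam_closedEBall_le

theorem isClosed_of_mem_closedBallsF {b : Set X} (hb : b ∈ closedBallsF X) : IsClosed b := by
  obtain ⟨x, r, -, rfl⟩ := hb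
  exact isClosed_closedBall

theorem ediam_lt_top_of_mem_closedBallsF {b : Set X} (hb : b ∈ closedBallsF X) :
    ediam b < ∞ := by
  obtain ⟨x, r, hr, rfl⟩ := hb
  exact (ediam_closedBall_le x hr.le).trans_lt (by finiteness)

theorem exists_closedBall_enlargement {b : Set X} (hb : b ∈ closedBallsF X) :
    ∃ E ∈ closedBallsF X, ediam E ≤ 6 * ediam b ∧
      ∀ a : Set X, (a ∩ b).Nonempty → ediam a ≤ 2 * ediam b → a ⊆ E := by
  obtain ⟨x, ρ, hρ, rfl⟩ := hb
  set d := ediam (closedBall x ρ)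
  have hd : d ≠ ∞ := (ediam_lt_top_of_mem_closedBallsF ⟨x, ρ, hρ, rfl⟩).ne
  -- a radius `3 d` must be positive; a ball of diameter `0` is its own enlargement
  rcases eq_zero_or_pos d with hd0 | hd0
  · refine ⟨closedBall x ρ, ⟨x, ρ, hρ, rfl⟩,
      le_mul_of_one_le_left zero_le (by norm_num), fun a ⟨y, hya, hyb⟩ ha z hz => ?_⟩
    have hzy : edist z y ≤ 0 := by
      simpa [hd0] using (edist_le_ediam_of_mem hz hya).trans ha
    rwa [nonpos_iff_eq_zero.1 hzy |> edist_eq_zero.1]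
  · refine ⟨closedBall x (3 * d.toReal),
      ⟨x, _, mul_pos three_pos (ENNReal.toReal_pos hd0.ne' hd), rfl⟩, ?_,
      fun a ⟨y, hya, hyb⟩ ha z hz => ?_⟩
    · calc ediam (closedBall x (3 * d.toReal)) ≤ 2 * ENNReal.ofReal (3 * d.toReal) :=
            ediam_closedBall_le x (by positivity)
        _ = 6 * d := by
            rw [ENNReal.ofReal_mul (by norm_num), ENNReal.ofReal_toReal hd, ← mul_assoc]
            norm_num
    · have hzx : edist z x ≤ 3 * d :=
        calc edist z x ≤ edist z y + edist y x := edist_triangle _ _ _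
          _ ≤ 2 * d + d := add_le_add ((edist_le_ediam_of_mem hz hya).trans ha)
              (edist_le_ediam_of_mem hyb (mem_closedBall_self hρ.le))
          _ = 3 * d := by ring
      rw [mem_closedBall, dist_edist]
      simpa [ENNReal.toReal_mul] using ENNReal.toReal_mono (by finiteness) hzx

theorem sizeDiam_le_rpow_mul {c : ℝ≥0∞} {α : ℝ} (hα : 0 ≤ α) {T T' : Set X} {k : ℝ≥0∞}
    (h : ediam T ≤ k * ediam T') : sizeDiam c α T ≤ k ^ α * sizeDiam c α T' := by
  calc sizeDiam c α T ≤ c * (k * ediam T') ^ α := by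
        unfold sizeDiam; gcongr; exact h
    _ = k ^ α * (c * ediam T' ^ α) := by rw [ENNReal.mul_rpow_of_nonneg _ _ hα]; ring
    _ = k ^ α * sizeDiam c α T' := rfl

theorem subset_biUnion_union_iUnion_of_vitali {t u : Set (Set X)}
    (hclosed : ∀ b ∈ u, IsClosed b)
    (hcov : ∀ a ∈ t, ∃ b ∈ u, (a ∩ b).Nonempty ∧ ediam a ≤ 2 * ediam b)
    {E : u → Set X}
    (hE : ∀ (b : u) (a : Set X), (a ∩ b).Nonempty → ediam a ≤ 2 * ediam (b : Set X) → a ⊆ E b)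
    {B : Set X} (hfine : ∀ x ∈ B, ∀ ε > 0, ∃ a ∈ t, x ∈ a ∧ ediam a < ε) (s : Finset u) :
    B ⊆ (⋃ b ∈ s, (b : Set X)) ∪ ⋃ b : {b : u // b ∉ s}, E b := by
  intro x hx
  set C := ⋃ b ∈ s, (b : Set X)
  by_cases hxC : x ∈ C
  · exact Or.inl hxC
  have hCclosed : IsClosed C := isClosed_biUnion_finset fun b _ => hclosed b b.2
  obtain ⟨a, hat, hxa, ha⟩ := hfine x hx _
    (infEDist_pos_iff_notMem_closure.2 (hCclosed.closure_eq ▸ hxC))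
  have haC : Disjoint a C := disjoint_left.2 fun y hya hyC =>
    (infEDist_le_edist_of_mem hyC).not_gt ((edist_le_ediam_of_mem hxa hya).trans_lt ha)
  obtain ⟨b, hbu, hab, hdiam⟩ := hcov a hat
  have hbs : ⟨b, hbu⟩ ∉ s := fun hbs =>
    hab.not_disjoint (haC.mono_right (subset_biUnion_of_mem (u := fun b : u => (b : Set X)) hbs))
  exact Or.inr (mem_iUnion.2 ⟨⟨⟨b, hbu⟩, hbs⟩, hE ⟨b, hbu⟩ a hab hdiam hxa⟩)

end Vitali

section VitaliEstimate

theorem mul_le_tsum_of_forall_finset_subset {ι : Type*} [Countable ι] (ν : OuterMeasure X)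
    {B : Set X} {b E : ι → Set X} {w : ι → ℝ≥0∞} {lam K : ℝ≥0∞} (hK : K ≠ ∞)
    (hw : ∑' i, w i ≠ ∞) (hb : ∀ i, lam * ν (b i) ≤ w i) (hE : ∀ i, lam * ν (E i) ≤ K * w i)
    (hcover : ∀ s : Finset ι, B ⊆ (⋃ i ∈ s, b i) ∪ ⋃ i : {i // i ∉ s}, E i) :
    lam * ν B ≤ ∑' i, w i := by
  have hbound : ∀ s : Finset ι, lam * ν B ≤ ∑' i, w i + K * ∑' i : {i // i ∉ s}, w i := by
    intro s
    calc lam * ν B ≤ lam * (∑ i ∈ s, ν (b i) + ∑' i : {i // i ∉ s}, ν (E i)) := by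
          gcongr
          exact (measure_mono (hcover s)).trans ((measure_union_le _ _).trans
            (add_le_add (measure_biUnion_finset_le s _) (measure_iUnion_le _)))
      _ = ∑ i ∈ s, lam * ν (b i) + ∑' i : {i // i ∉ s}, lam * ν (E i) := by
          rw [mul_add, Finset.mul_sum, ENNReal.tsum_mul_left]
      _ ≤ ∑ i ∈ s, w i + ∑' i : {i // i ∉ s}, K * w i :=
          add_le_add (Finset.sum_le_sum fun i _ => hb i) (ENNReal.tsum_le_tsum fun i => hE i)
      _ ≤ ∑' i, w i + K * ∑' i : {i // i ∉ s}, w i := by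
          rw [ENNReal.tsum_mul_left]
          gcongr
          exact ENNReal.sum_le_tsum s
  have hlim := (tendsto_const_nhds (x := ∑' i, w i)).add
    (ENNReal.Tendsto.const_mul (ENNReal.tendsto_tsum_compl_atTop_zero hw) (Or.inr hK))
  rw [mul_zero, add_zero] at hlim
  exact ge_of_tendsto' hlim hbound

variable [MetricSpace X] [MeasurableSpace X] [BorelSpace X]

theorem mul_pre_le_measure_of_fine {μ : Measure X} {c : ℝ≥0∞} {α : ℝ} (hα : 0 ≤ α)
    {lam r : ℝ≥0∞} (hr : 0 < r) {B W : Set X} (hW : μ W ≠ ∞)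
    (hfine : ∀ x ∈ B, ∀ ε > 0, ∃ T ∈ closedBallsF X, x ∈ T ∧ T ⊆ W ∧ ediam T < ε ∧
      lam * sizeDiam c α T ≤ μ T ∧ 0 < μ T) :
    lam * OuterMeasure.mkMetric'.pre (sizeOn (closedBallsF X) (sizeDiam c α)) r B ≤ μ W := by
  -- members of `t` have diameter `≤ Δ`, their enlargements `≤ 6 Δ ≤ r`: both count in `pre r`
  set Δ : ℝ≥0∞ := min 1 (r / 6)
  have hΔ0 : 0 < Δ := lt_min one_pos (ENNReal.div_pos hr.ne' (by norm_num))
  have hΔ : Δ ≠ ∞ := ne_top_of_le_ne_top ENNReal.one_ne_top (min_le_left _ _)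
  have h6Δ : 6 * Δ ≤ r := (mul_le_mul_right (min_le_right _ _) 6).trans
    (ENNReal.mul_div_cancel (by norm_num) (by norm_num)).le
  have hΔr : Δ ≤ r := (le_mul_of_one_le_left zero_le (by norm_num : (1 : ℝ≥0∞) ≤ 6)).trans h6Δ
  set t := {T | T ∈ closedBallsF X ∧ T ⊆ W ∧ ediam T ≤ Δ ∧
    lam * sizeDiam c α T ≤ μ T ∧ 0 < μ T}
  obtain ⟨u, hut, hdisj, hcov⟩ := exists_disjoint_subfamily_ediam_le_two_mul hΔ
    (t := t) (fun a ha => nonempty_of_measure_ne_zero ha.2.2.2.2.ne') (fun a ha => ha.2.2.1)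
  have hmeas : ∀ b : u, MeasurableSet (b : Set X) := fun b =>
    (isClosed_of_mem_closedBallsF (hut b.2).1).measurableSet
  have hdisj' : Pairwise (Function.onFun Disjoint fun b : u => (b : Set X)) :=
    fun b b' hbb' => hdisj b.2 b'.2 (Subtype.coe_injective.ne hbb')
  have hW' : μ (⋃ b : u, (b : Set X)) ≤ μ W :=
    measure_mono (iUnion_subset fun b => (hut b.2).2.1)
  have : Countable u := by
    rw [← Set.countable_univ_iff]
    exact (Measure.countable_meas_pos_of_disjoint_of_meas_iUnion_ne_top μ hmeas hdisj'
      (ne_top_of_le_ne_top hW hW')).mono fun b _ => (hut b.2).2.2.2.2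
  choose E hEball hEdiam hE using fun b : u => exists_closedBall_enlargement (hut b.2).1
  have hsum := (tsum_meas_le_meas_iUnion_of_disjoint μ hmeas hdisj').trans hW'
  refine le_trans ?_ hsum
  refine mul_le_tsum_of_forall_finset_subset _ (K := 6 ^ α)
    (ENNReal.rpow_ne_top_of_nonneg hα (by norm_num)) (ne_top_of_le_ne_top hW hsum)
    (fun b => ?_) (fun b => ?_) (subset_biUnion_union_iUnion_of_vitali
      (fun b hb => isClosed_of_mem_closedBallsF (hut hb).1) hcov hE fun x hx ε hε => ?_)
  · obtain ⟨hbS, -, hbΔ, hbμ, -⟩ := hut b.2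
    calc _ ≤ lam * sizeDiam c α (b : Set X) := by
          gcongr
          exact (OuterMeasure.mkMetric'.pre_le (hbΔ.trans hΔr)).trans_eq (sizeOn_of_mem hbS)
      _ ≤ μ b := hbμ
  · obtain ⟨-, -, hbΔ, hbμ, -⟩ := hut b.2
    calc _ ≤ lam * (6 ^ α * sizeDiam c α (b : Set X)) := by
          gcongr
          refine (OuterMeasure.mkMetric'.pre_le ((hEdiam b).trans ?_)).trans_eq
            (sizeOn_of_mem (hEball b)) |>.trans (sizeDiam_le_rpow_mul hα (hEdiam b))
          exact (mul_le_mul_right hbΔ 6).trans h6Δ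
      _ ≤ 6 ^ α * μ b := by rw [mul_left_comm]; gcongr
  · obtain ⟨T, hT, hxT, hTW, hTε, hTμ, hTpos⟩ := hfine x hx (min ε Δ) (lt_min hε hΔ0)
    exact ⟨T, ⟨hT, hTW, (hTε.trans_le (min_le_right _ _)).le, hTμ, hTpos⟩, hxT,
      hTε.trans_le (min_le_left _ _)⟩

end VitaliEstimate

section LowerBound
variable [MetricSpace X] [MeasurableSpace X] [BorelSpace X] {μ : Measure X} {c : ℝ≥0∞} {α : ℝ}

theorem mul_psiM_le_measure_of_subset_isOpen (hα : 0 ≤ α) {lam : ℝ≥0∞} {A U : Set X}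
    (hA : MeasurableSet A) (hAU : A ⊆ U) (hU : IsOpen U) (hμU : μ U ≠ ∞)
    (h : ∀ x ∈ A, lam < fedDensity μ (closedBallsF X) (sizeDiam c α) x) :
    lam * psiM (closedBallsF X) (sizeDiam c α) A ≤ μ A := by
  -- `μ.restrict U` is finite, hence outer regular: it suffices to bound `μ (V ∩ U)`, `V ⊇ A` open
  have : IsFiniteMeasure (μ.restrict U) :=
    ⟨by rwa [Measure.restrict_apply_univ, lt_top_iff_ne_top]⟩
  rw [← Measure.restrict_eq_self μ hAU, Set.measure_eq_iInf_isOpen A (μ.restrict U),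
    psiM_apply_eq_iSup_pre _ _ hA]
  refine le_iInf₂ fun V hAV => le_iInf fun hV => ?_
  rw [Measure.restrict_apply hV.measurableSet]
  simp only [ENNReal.mul_iSup, iSup_le_iff]
  exact fun r hr => mul_pre_le_measure_of_fine hα hr
    (ne_top_of_le_ne_top hμU (measure_mono inter_subset_right)) fun x hx ε hε =>
      exists_subset_of_lt_fedDensity (h x hx) ((hV.inter hU).mem_nhds ⟨hAV hx, hAU hx⟩) hε

theorem mul_psiM_le_measure_of_lt_fedDensity (hα : 0 ≤ α) {lam : ℝ≥0∞} {A : Set X}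
    (hA : MeasurableSet A) (hsep : TopologicalSpace.IsSeparable A)
    (hloc : ∀ x ∈ A, μ.FiniteAtFilter (𝓝 x))
    (h : ∀ x ∈ A, lam < fedDensity μ (closedBallsF X) (sizeDiam c α) x) :
    lam * psiM (closedBallsF X) (sizeDiam c α) A ≤ μ A := by
  obtain ⟨U, hUo, hμU, hAU⟩ := exists_seq_isOpen_measure_lt_top_cover hsep hloc
  let A' : ℕ → Set X := fun n => A ∩ disjointed U n
  have hA'meas : ∀ n, MeasurableSet (A' n) :=
    fun n => hA.inter (MeasurableSet.disjointed (fun k => (hUo k).measurableSet) n)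
  have hA'disj : Pairwise (Function.onFun Disjoint A') :=
    (disjoint_disjointed U).mono fun _ _ hd => hd.mono inter_subset_right inter_subset_right
  have hAeq : A = ⋃ n, A' n := by
    rw [← inter_iUnion, iUnion_disjointed, inter_eq_left.2 hAU]
  rw [hAeq, measure_iUnion hA'disj hA'meas, measure_iUnion hA'disj hA'meas, ← ENNReal.tsum_mul_left]
  refine ENNReal.tsum_le_tsum fun n => mul_psiM_le_measure_of_subset_isOpen hα (hA'meas n)
    (inter_subset_right.trans (disjointed_subset U n)) (hUo n) (hμU n).ne
    fun x hx => h x hx.1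

end LowerBound

section DensityBounds
variable [MetricSpace X] [MeasurableSpace X] [BorelSpace X] {μ : Measure X} {α₀ : ℝ≥0∞}
  {A : Set X}

theorem measure_le_mul_psiM_of_fedDensity_le {S : Set (Set X)} {ζ : Set X → ℝ≥0∞}
    (hα₀ : α₀ ≠ ∞) (hfin : psiM S ζ A ≠ ∞) (h : ∀ x ∈ A, fedDensity μ S ζ x ≤ α₀) :
    μ A ≤ α₀ * psiM S ζ A := by
  refine ENNReal.le_mul_of_forall_lt (Or.inr hfin) (Or.inl hα₀) fun a ha b hb => ?_
  obtain ⟨lam, hα₀lam, hlama⟩ := exists_between ha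
  calc μ A ≤ lam * psiM S ζ A :=
        measure_le_mul_psiM_of_fedDensity_lt hlama.ne_top fun x hx => (h x hx).trans_lt hα₀lam
    _ ≤ a * b := mul_le_mul' hlama.le hb.le

theorem mul_psiM_le_measure_of_le_fedDensity {c : ℝ≥0∞} {α : ℝ} (hα : 0 ≤ α)
    (hA : MeasurableSet A) (hsep : TopologicalSpace.IsSeparable A)
    (hloc : ∀ x ∈ A, μ.FiniteAtFilter (𝓝 x))
    (h : ∀ x ∈ A, α₀ ≤ fedDensity μ (closedBallsF X) (sizeDiam c α) x) :
    α₀ * psiM (closedBallsF X) (sizeDiam c α) A ≤ μ A :=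
  ENNReal.mul_le_of_forall_lt fun a ha _ hb => (mul_le_mul_right hb.le a).trans
    (mul_psiM_le_measure_of_lt_fedDensity hα hA hsep hloc fun x hx => ha.trans_le (h x hx))

end DensityBounds

theorem stmt16_general [MetricSpace X] [MeasurableSpace X] [BorelSpace X]
    (μ : Measure X)
    (α : ℝ) (hα : 0 < α) (c : ℝ≥0∞) (hc' : c < ∞)
    (A : Set X) (hA : MeasurableSet A)
    (hfin : psiM (closedBallsF X) (sizeDiam c α) A < ∞)
    (hpos : 0 < psiM (closedBallsF X) (sizeDiam c α) A)
    (β α₀ : ℝ≥0∞) (hβα : β < α₀) (hα₀ : α₀ < ∞)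
    (hup : ∀ x ∈ A, upperSphDensity μ c α x = β)
    (hfed : ∀ x ∈ A, fedDensity μ (closedBallsF X) (sizeDiam c α) x = α₀) :
    μ A = α₀ * psiM (closedBallsF X) (sizeDiam c α) A ∧
    ∀ t : ℝ≥0∞, β < t → t < α₀ →
      t * psiM (closedBallsF X) (sizeDiam c α) A < μ A := by
  have hloc : ∀ x ∈ A, μ.FiniteAtFilter (𝓝 x) := fun x hx =>
    finiteAtFilter_nhds_of_upperSphDensity_lt_top hc'.ne ((hup x hx).trans_lt (hβα.trans hα₀))
  have heq : μ A = α₀ * psiM (closedBallsF X) (sizeDiam c α) A := le_antisymm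
    (measure_le_mul_psiM_of_fedDensity_le hα₀.ne hfin.ne fun x hx => (hfed x hx).le)
    (mul_psiM_le_measure_of_le_fedDensity hα.le hA (isSeparable_of_psiM_lt_top hfin) hloc
      fun x hx => (hfed x hx).ge)
  exact ⟨heq, fun t _ ht => heq ▸ ENNReal.mul_lt_mul_left hpos.ne' hfin.ne ht⟩

/-- If on `A` the upper centered density is a constant `β` while the
Federer density is a constant `α₀` with `0 < β < α₀`, and `0 < S^α(A) < ∞` with
`μ⌊A ≪ S^α⌊A`, then `μ(A) = α₀ S^α(A) > t S^α(A)` for every `t ∈ (β, α₀)`; in particular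
the constant `1` cannot replace `2^m` in Federer 2.10.19(1), even for the spherical
Hausdorff measure. -/
theorem stmt16 [MetricSpace X] [MeasurableSpace X] [BorelSpace X]
    (μ : Measure X) (hreg : BorelRegular μ)
    (α : ℝ) (hα : 0 < α) (c : ℝ≥0∞) (hc : 0 < c) (hc' : c < ∞)
    (A : Set X) (hA : MeasurableSet A)
    (hfine : ∀ x ∈ A, Fine (adm μ (closedBallsF X) (sizeDiam c α)) x)
    (hfin : psiM (closedBallsF X) (sizeDiam c α) A < ∞)
    (hpos : 0 < psiM (closedBallsF X) (sizeDiam c α) A)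
    (habs : μ.restrict A ≪ (psiM (closedBallsF X) (sizeDiam c α)).restrict A)
    (β α₀ : ℝ≥0∞) (hβ : 0 < β) (hβα : β < α₀) (hα₀ : α₀ < ∞)
    (hup : ∀ x ∈ A, upperSphDensity μ c α x = β)
    (hfed : ∀ x ∈ A, fedDensity μ (closedBallsF X) (sizeDiam c α) x = α₀) :
    μ A = α₀ * psiM (closedBallsF X) (sizeDiam c α) A ∧
    ∀ t : ℝ≥0∞, β < t → t < α₀ →
      t * psiM (closedBallsF X) (sizeDiam c α) A < μ A :=
  stmt16_general μ α hα c hc' A hA hfin hpos β α₀ hβα hα₀ hup hfed
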